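/- Fix σ_z > 0, μ_z < 0 with |μ_z| sufficiently large, ϑ < 0, δ > 0, and γ̃ ∈ (-1,0). Let Q be as above with positive root λ₊ > 1 and Q(-γ̃) < 0. Set A = -δ/(2Q(-γ̃)) > 0, z_∞ = (λ₊/(-ϑ A(λ₊ + γ̃)))^{-1/γ̃}, B = (-γ̃ A/λ₊) z_∞^{-γ̃-λ₊}. Define F̂(z) = -1/ϑ - A z^{-γ̃} + B z^{λ₊} for 0 < z < z_∞ and F̂(z) = 0 for z ≥ z_∞. Then F̂ is C¹ on (0,∞), F̂'(z) < 0 for z ∈ (0, z_∞), F̂ > 0 on (0,z_∞), and F̂ satisfies -L_Z F̂(z) = -(δ/2) z^{-γ̃} + 1 for 0 < z < z_∞, where L_Z f(z) = (σ_z²/2) z² f''(z) + μ_z z f'(z) + ϑ f(z). -/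

import Mathlib

/-!
On `(0, z∞)` the candidate is a constant plus multiples of `z ^ (-γ̃)` and `z ^ λ₊`, and the
Euler-type operator `L_Z` acts on `z ^ l` by multiplication with `Q l`. Since `Q λ₊ = 0` and
`A Q(-γ̃) = -δ/2`, the equation follows. The constants `z∞` and `B` are exactly those making the
value and the derivative vanish at `z∞` (smooth fit), so pasting with `0` is `C¹`. The derivative
is `z ^ (-γ̃-1) (γ̃ A + λ₊ B z ^ (λ₊+γ̃))`, whose second factor increases to `0` at `z∞`; hence the
candidate decreases strictly to `0` and is positive before `z∞`.
-/

open Set Filter Topology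

noncomputable def powSum (c a p b q z : ℝ) : ℝ := c + a * z ^ p + b * z ^ q

noncomputable def eulerOp (σ μ ϑ : ℝ) (f : ℝ → ℝ) (z : ℝ) : ℝ :=
  σ ^ 2 / 2 * z ^ 2 * deriv (deriv f) z + μ * z * deriv f z + ϑ * f z

noncomputable def charPoly (σ μ ϑ l : ℝ) : ℝ := σ ^ 2 / 2 * l ^ 2 + (μ - σ ^ 2 / 2) * l + ϑ

theorem eulerOp_congr {σ μ ϑ z : ℝ} {f g : ℝ → ℝ} (h : f =ᶠ[𝓝 z] g) :
    eulerOp σ μ ϑ f z = eulerOp σ μ ϑ g z := by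
  rw [eulerOp, eulerOp, h.deriv.deriv_eq, h.deriv_eq, h.eq_of_nhds]

section powSum

variable {c a p b q z : ℝ}

theorem hasDerivAt_powSum (hz : 0 < z) :
    HasDerivAt (powSum c a p b q) (powSum 0 (a * p) (p - 1) (b * q) (q - 1) z) z := by
  have hp := (Real.hasDerivAt_rpow_const (p := p) (Or.inl hz.ne')).const_mul a
  have hq := (Real.hasDerivAt_rpow_const (p := q) (Or.inl hz.ne')).const_mul b
  have h : HasDerivAt (fun y => c + a * y ^ p + b * y ^ q) _ z :=
    ((hasDerivAt_const z c).add hp).add hq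
  exact h.congr_deriv (by simp only [powSum]; ring)

theorem deriv_powSum_eventuallyEq (hz : 0 < z) :
    deriv (powSum c a p b q) =ᶠ[𝓝 z] powSum 0 (a * p) (p - 1) (b * q) (q - 1) :=
  eventually_of_mem (Ioi_mem_nhds hz) fun _ hw => (hasDerivAt_powSum hw).deriv

theorem contDiffOn_powSum {n : WithTop ℕ∞} : ContDiffOn ℝ n (powSum c a p b q) (Ioi 0) :=
  fun _ hz => ((contDiffAt_const.add (contDiffAt_const.mul
    (Real.contDiffAt_rpow_const_of_ne hz.ne'))).add (contDiffAt_const.mul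
    (Real.contDiffAt_rpow_const_of_ne hz.ne'))).contDiffWithinAt

theorem eulerOp_powSum (σ μ ϑ : ℝ) (hz : 0 < z) :
    eulerOp σ μ ϑ (powSum c a p b q) z =
      ϑ * c + a * charPoly σ μ ϑ p * z ^ p + b * charPoly σ μ ϑ q * z ^ q := by
  have h2 : deriv (deriv (powSum c a p b q)) z =
      powSum 0 (a * p * (p - 1)) (p - 1 - 1) (b * q * (q - 1)) (q - 1 - 1) z := by
    rw [(deriv_powSum_eventuallyEq hz).deriv_eq, (hasDerivAt_powSum hz).deriv]
  rw [eulerOp, h2, (hasDerivAt_powSum hz).deriv]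
  simp only [powSum, charPoly, Real.rpow_sub hz, Real.rpow_one]
  field_simp
  ring

theorem powSum_zero_neg_of_lt {z₀ : ℝ} (hb : 0 < b) (hpq : p < q) (hz : 0 < z) (hzz₀ : z < z₀)
    (h₀ : powSum 0 a p b q z₀ = 0) : powSum 0 a p b q z < 0 := by
  have factor : ∀ x, 0 < x → powSum 0 a p b q x = x ^ p * (a + b * x ^ (q - p)) := by
    intro x hx
    simp only [powSum, Real.rpow_sub hx]
    field_simp
    ring
  have hz₀ : a + b * z₀ ^ (q - p) = 0 := by
    rw [factor z₀ (hz.trans hzz₀)] at h₀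
    exact (mul_eq_zero.mp h₀).resolve_left (Real.rpow_pos_of_pos (hz.trans hzz₀) p).ne'
  have hlt : z ^ (q - p) < z₀ ^ (q - p) := Real.rpow_lt_rpow hz.le hzz₀ (sub_pos.2 hpq)
  rw [factor z hz]
  exact mul_neg_of_pos_of_neg (Real.rpow_pos_of_pos hz p) (by nlinarith)

end powSum

theorem pos_of_deriv_neg_of_eq_zero {g g' : ℝ → ℝ} {a z₀ : ℝ}
    (hg : ∀ z ∈ Ioc a z₀, HasDerivAt g (g' z) z) (hneg : ∀ z ∈ Ioo a z₀, g' z < 0)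
    (h₀ : g z₀ = 0) : ∀ z ∈ Ioo a z₀, 0 < g z := by
  have hanti : StrictAntiOn g (Ioc a z₀) := by
    refine strictAntiOn_of_deriv_neg (convex_Ioc a z₀)
      (fun z hz => (hg z hz).continuousAt.continuousWithinAt) fun z hz => ?_
    rw [interior_Ioc] at hz
    rw [(hg z (Ioo_subset_Ioc_self hz)).deriv]
    exact hneg z hz
  intro z hz
  simpa [h₀] using hanti (Ioo_subset_Ioc_self hz) ⟨hz.1.trans hz.2, le_rfl⟩ hz.2

theorem hasDerivAt_ite_lt_zero {g : ℝ → ℝ} {z₀ : ℝ} (hg : HasDerivAt g 0 z₀) (h₀ : g z₀ = 0) :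
    HasDerivAt (fun z => if z < z₀ then g z else 0) 0 z₀ := by
  have hleft : HasDerivWithinAt (fun z => if z < z₀ then g z else 0) 0 (Iic z₀) z₀ := by
    refine hg.hasDerivWithinAt.congr (fun z hz => ?_) (by simp [h₀])
    rcases (mem_Iic.1 hz).lt_or_eq with h | rfl
    · simp [h]
    · simp [h₀]
  have hright : HasDerivWithinAt (fun z => if z < z₀ then g z else 0) 0 (Ici z₀) z₀ :=
    (hasDerivWithinAt_const z₀ _ 0).congr (fun z hz => by simp [not_lt.2 (mem_Ici.1 hz)])
      (by simp)
  simpa [Iic_union_Ici] using hleft.union hright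

theorem contDiffOn_one_ite_lt_zero {g : ℝ → ℝ} {s : Set ℝ} {z₀ : ℝ} (hs : IsOpen s)
    (hg : ContDiffOn ℝ 1 g s) (h₀ : g z₀ = 0) (h₁ : deriv g z₀ = 0) :
    ContDiffOn ℝ 1 (fun z => if z < z₀ then g z else 0) s := by
  have hgd : ∀ z ∈ s, HasDerivAt g (deriv g z) z := fun z hz =>
    ((hg.differentiableOn one_ne_zero z hz).differentiableAt (hs.mem_nhds hz)).hasDerivAt
  have hfd : ∀ z ∈ s, HasDerivAt (fun z => if z < z₀ then g z else 0)
      (if z < z₀ then deriv g z else 0) z := by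
    intro z hz
    rcases lt_trichotomy z z₀ with h | rfl | h
    · rw [if_pos h]
      exact (hgd z hz).congr_of_eventuallyEq
        (eventually_of_mem (Iio_mem_nhds h) fun w hw => if_pos hw)
    · rw [if_neg (lt_irrefl z)]
      exact hasDerivAt_ite_lt_zero (h₁ ▸ hgd z hz) h₀
    · rw [if_neg h.not_gt]
      exact (hasDerivAt_const z 0).congr_of_eventuallyEq
        (eventually_of_mem (Ioi_mem_nhds h) fun w hw => if_neg (not_lt.2 (le_of_lt hw)))
  rw [show (1 : WithTop ℕ∞) = 0 + 1 from rfl, contDiffOn_succ_iff_deriv_of_isOpen hs]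
  refine ⟨fun z hz => (hfd z hz).differentiableAt.differentiableWithinAt, by simp, ?_⟩
  rw [contDiffOn_zero]
  refine ContinuousOn.congr ?_ fun z hz => (hfd z hz).deriv
  refine ContinuousOn.if (fun z hz => ?_)
    ((hg.continuousOn_deriv_of_isOpen hs le_rfl).mono inter_subset_left) continuousOn_const
  rw [show {z | z < z₀} = Iio z₀ from rfl, frontier_Iio] at hz
  rw [mem_singleton_iff.1 hz.2, h₁]

theorem powSum_smoothFit {ϑ A γt lp zinf B : ℝ} (hϑ : ϑ < 0) (hA : 0 < A) (hγ : γt ≠ 0)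
    (hlp : 0 < lp) (hlg : 0 < lp + γt)
    (hzinf : zinf = (lp / (-ϑ * A * (lp + γt))) ^ (-(1 / γt)))
    (hB : B = -γt * A / lp * zinf ^ (-γt - lp)) :
    0 < zinf ∧ powSum (-1 / ϑ) (-A) (-γt) B lp zinf = 0 ∧
      powSum 0 (-A * -γt) (-γt - 1) (B * lp) (lp - 1) zinf = 0 := by
  have hX : 0 < lp / (-ϑ * A * (lp + γt)) := by
    have : 0 < -ϑ * A := mul_pos (neg_pos.2 hϑ) hA
    positivity
  have hz : 0 < zinf := hzinf ▸ Real.rpow_pos_of_pos hX _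
  have hzγ : zinf ^ (-γt) = lp / (-ϑ * A * (lp + γt)) := by
    rw [hzinf, ← Real.rpow_mul hX.le, show -(1 / γt) * -γt = 1 by field_simp, Real.rpow_one]
  have hBz : B * zinf ^ lp = -γt * A / lp * zinf ^ (-γt) := by
    rw [hB, mul_assoc, ← Real.rpow_add hz, show -γt - lp + lp = -γt by ring]
  refine ⟨hz, ?_, ?_⟩
  · simp only [powSum]
    rw [hBz, hzγ]
    field_simp
    ring
  · simp only [powSum, Real.rpow_sub hz, Real.rpow_one]
    rw [show B * lp * (zinf ^ lp / zinf) = lp / zinf * (B * zinf ^ lp) by ring, hBz]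
    field_simp
    ring

theorem stmt8_general (σ μ ϑ δ γt lp A zinf B : ℝ) (Q Fh : ℝ → ℝ)
    (hϑ : ϑ < 0) (hδ : 0 < δ)
    (hγ1 : -1 < γt) (hγ2 : γt < 0)
    (hQ : ∀ l, Q l = σ ^ 2 / 2 * l ^ 2 + (μ - σ ^ 2 / 2) * l + ϑ)
    (hlp : 1 < lp) (hroot : Q lp = 0) (hQγ : Q (-γt) < 0)
    (hA : A = -δ / (2 * Q (-γt)))
    (hzinf : zinf = (lp / (-ϑ * A * (lp + γt))) ^ (-(1 / γt)))
    (hB : B = -γt * A / lp * zinf ^ (-γt - lp))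
    (hF : ∀ z : ℝ, Fh z = if z < zinf then -1 / ϑ - A * z ^ (-γt) + B * z ^ lp else 0) :
    0 < A ∧
    ContDiffOn ℝ 1 Fh (Set.Ioi 0) ∧
    (∀ z ∈ Set.Ioo 0 zinf, deriv Fh z < 0) ∧
    (∀ z ∈ Set.Ioo 0 zinf, 0 < Fh z) ∧
    (∀ z ∈ Set.Ioo 0 zinf,
      -(σ ^ 2 / 2 * z ^ 2 * deriv (deriv Fh) z + μ * z * deriv Fh z + ϑ * Fh z)
        = -(δ / 2) * z ^ (-γt) + 1) := by
  have hApos : 0 < A := hA ▸ div_pos_of_neg_of_neg (by linarith) (by linarith)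
  set g := powSum (-1 / ϑ) (-A) (-γt) B lp
  set g' := powSum 0 (-A * -γt) (-γt - 1) (B * lp) (lp - 1)
  obtain ⟨hzinf_pos, hg₀, hg'₀⟩ := powSum_smoothFit hϑ hApos hγ2.ne (by linarith) (by linarith) hzinf hB
  have hBpos : 0 < B := hB ▸ mul_pos (div_pos (mul_pos (neg_pos.2 hγ2) hApos) (by linarith))
    (Real.rpow_pos_of_pos hzinf_pos _)
  have hFg : Fh = fun z => if z < zinf then g z else 0 := by
    ext z
    rw [hF]
    simp only [g, powSum, neg_mul, ← sub_eq_add_neg]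
  have hFg_near : ∀ z ∈ Ioo 0 zinf, Fh =ᶠ[𝓝 z] g := fun z hz =>
    eventually_of_mem (Iio_mem_nhds hz.2) fun w hw => by simp [hFg, mem_Iio.1 hw]
  have hg'neg : ∀ z ∈ Ioo 0 zinf, g' z < 0 := fun z hz =>
    powSum_zero_neg_of_lt (mul_pos hBpos (by linarith)) (by linarith) hz.1 hz.2 hg'₀
  refine ⟨hApos, ?_, fun z hz => ?_, fun z hz => ?_, fun z hz => ?_⟩
  · rw [hFg]
    exact contDiffOn_one_ite_lt_zero isOpen_Ioi contDiffOn_powSum hg₀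
      ((hasDerivAt_powSum hzinf_pos).deriv.trans hg'₀)
  · rw [(hFg_near z hz).deriv_eq, (hasDerivAt_powSum hz.1).deriv]
    exact hg'neg z hz
  · rw [(hFg_near z hz).eq_of_nhds]
    exact pos_of_deriv_neg_of_eq_zero (fun w hw => hasDerivAt_powSum hw.1) hg'neg hg₀ z hz
  · change -eulerOp σ μ ϑ Fh z = _
    have hQ' : charPoly σ μ ϑ = Q := funext fun l => (hQ l).symm
    rw [eulerOp_congr (hFg_near z hz), eulerOp_powSum σ μ ϑ hz.1, hQ', hroot, hA]
    field_simp [hϑ.ne, hQγ.ne]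
    ring

theorem stmt8 (σ μ ϑ δ γt lp A zinf B : ℝ) (Q Fh : ℝ → ℝ)
    (hσ : 0 < σ) (hμ : μ < 0) (hϑ : ϑ < 0) (hδ : 0 < δ)
    (hγ1 : -1 < γt) (hγ2 : γt < 0)
    (hQ : ∀ l, Q l = σ ^ 2 / 2 * l ^ 2 + (μ - σ ^ 2 / 2) * l + ϑ)
    (hlp : 1 < lp) (hroot : Q lp = 0) (hQγ : Q (-γt) < 0)
    (hA : A = -δ / (2 * Q (-γt)))
    (hzinf : zinf = (lp / (-ϑ * A * (lp + γt))) ^ (-(1 / γt)))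
    (hB : B = -γt * A / lp * zinf ^ (-γt - lp))
    (hF : ∀ z : ℝ, Fh z = if z < zinf then -1 / ϑ - A * z ^ (-γt) + B * z ^ lp else 0) :
    0 < A ∧
    ContDiffOn ℝ 1 Fh (Set.Ioi 0) ∧
    (∀ z ∈ Set.Ioo 0 zinf, deriv Fh z < 0) ∧
    (∀ z ∈ Set.Ioo 0 zinf, 0 < Fh z) ∧
    (∀ z ∈ Set.Ioo 0 zinf,
      -(σ ^ 2 / 2 * z ^ 2 * deriv (deriv Fh) z + μ * z * deriv Fh z + ϑ * Fh z)
        = -(δ / 2) * z ^ (-γt) + 1) :=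
  stmt8_general σ μ ϑ δ γt lp A zinf B Q Fh hϑ hδ hγ1 hγ2 hQ hlp hroot hQγ hA hzinf hB hF
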